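/- Let G be a compact abelian topological group with a continuous length function l and Haar probability measure λ, and let (H_n)_{n∈ℕ} be a sequence of closed subgroups of G converging to G for the Hausdorff distance associated to the metric d_l. For each n let λ_n denote the Haar probability measure of the compact group H_n. Then for every continuous function f : G → ℝ, the integrals ∫_{H_n} f(h) dλ_n(h) converge to ∫_G f dλ as n → ∞; equivalently, the pushforwards to G of the measures λ_n converge weakly to λ. -/

import Mathlib

open MeasureTheory

/-!
Since `G` is compact, a continuous `f` is uniformly continuous for `d_l`, so once every point of
`G` is `δ`-close to `Hₙ`, every coset `Hₙ x` contains a point `z` with `‖f - f(· * z)‖∞ ≤ ε`.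
By invariance of `λₙ`, the average of `f(· * x)` over `Hₙ` is then `ε`-close to the average of
`f`; integrating over `x ∈ G` and swapping the integrals with Fubini, using invariance of `μ`,
turns the average of `f(· * x)` into `∫ f dμ`.
-/

section Length

variable {G : Type*} [Group G] {l : G → ℝ}

theorem length_nonneg (hone : l 1 = 0) (hinv : ∀ g, l g⁻¹ = l g)
    (hsub : ∀ g h, l (g * h) ≤ l g + l h) (g : G) : 0 ≤ l g := by
  have := hsub g g⁻¹
  rw [mul_inv_cancel, hone, hinv] at this
  linarith

theorem length_pos (hzero : ∀ g, l g = 0 ↔ g = 1) (hinv : ∀ g, l g⁻¹ = l g)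
    (hsub : ∀ g h, l (g * h) ≤ l g + l h) {g : G} (hg : g ≠ 1) : 0 < l g :=
  (length_nonneg ((hzero 1).2 rfl) hinv hsub g).lt_of_ne' (mt (hzero g).1 hg)

end Length

theorem Continuous.exists_pos_forall_dist_lt_of_lt {X α : Type*} [TopologicalSpace X]
    [CompactSpace X] [PseudoMetricSpace α] {f : X → α} (hf : Continuous f) {d : X → X → ℝ}
    (hd : Continuous (Function.uncurry d)) (hd_pos : ∀ x y, x ≠ y → 0 < d x y) {ε : ℝ}
    (hε : 0 < ε) :
    ∃ δ > 0, ∀ x y, d x y < δ → dist (f x) (f y) < ε := by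
  set K := {p : X × X | ε ≤ dist (f p.1) (f p.2)}
  have hK : IsCompact K := (isClosed_le continuous_const
    ((hf.comp continuous_fst).dist (hf.comp continuous_snd))).isCompact
  obtain ⟨δ, hδ, hδK⟩ := hK.exists_forall_le' hd.continuousOn fun p hp =>
    hd_pos p.1 p.2 fun h => by simp [K, h] at hp; linarith
  refine ⟨δ, hδ, fun x y hxy => ?_⟩
  by_contra! h
  exact (hδK (x, y) h).not_gt hxy

section Averaging

variable {G E : Type*} [CommGroup G] [TopologicalSpace G] [IsTopologicalGroup G]
  [MeasurableSpace G] [BorelSpace G] [NormedAddCommGroup E] [NormedSpace ℝ E]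
  {K : Subgroup G} [CompactSpace K] (ν : Measure K) [IsProbabilityMeasure ν]
  [ν.IsMulLeftInvariant] {f : G → E}

theorem norm_integral_sub_comp_mul_le (hf : Continuous f) {x y : G} (hy : y ∈ K) {ε : ℝ}
    (hε : ∀ g, dist (f g) (f (g * (y * x))) ≤ ε) :
    ‖∫ h : K, (f h - f (h * x)) ∂ν‖ ≤ ε := by
  have hint : ∀ z : G, Integrable (fun h : K => f (h * z)) ν := fun z =>
    (hf.comp (continuous_subtype_val.mul continuous_const)).integrable_of_hasCompactSupport
      (HasCompactSupport.of_compactSpace _)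
  have htrans : ∫ h : K, f (h * x) ∂ν = ∫ h : K, f (h * (y * x)) ∂ν := by
    rw [← integral_mul_left_eq_self _ (⟨y, hy⟩ : K)]
    simp only [Subgroup.coe_mul, mul_left_comm y, mul_assoc]
  have hint_one : Integrable (fun h : K => f h) ν := by simpa using hint 1
  rw [integral_sub hint_one (hint x), htrans, ← integral_sub hint_one (hint _)]
  calc ‖∫ h : K, (f h - f (h * (y * x))) ∂ν‖ ≤ ε * ν.real Set.univ :=
        norm_integral_le_of_norm_le_const (.of_forall fun h => by
          rw [← dist_eq_norm]; exact hε h)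
    _ = ε := by simp

theorem dist_integral_subgroup_integral_le [CompleteSpace E] [CompactSpace G] (μ : Measure G)
    [IsProbabilityMeasure μ] [μ.IsMulLeftInvariant] (hf : Continuous f) {ε : ℝ}
    (hK : ∀ x, ∃ y ∈ K, ∀ g, dist (f g) (f (g * (y * x))) ≤ ε) :
    dist (∫ h : K, f h ∂ν) (∫ g, f g ∂μ) ≤ ε := by
  have hint : ∀ h : G, Integrable (fun x => f (h * x)) μ := fun h =>
    (hf.comp (continuous_const.mul continuous_id)).integrable_of_hasCompactSupport
      (HasCompactSupport.of_compactSpace _)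
  have hinner : ∀ h : K, ∫ x, (f h - f (h * x)) ∂μ = f h - ∫ g, f g ∂μ := fun h => by
    rw [integral_sub (integrable_const _) (hint h), integral_mul_left_eq_self]
    simp
  have hswap : ∫ h : K, f h ∂ν - ∫ g, f g ∂μ = ∫ x, ∫ h : K, (f h - f (h * x)) ∂ν ∂μ := by
    rw [← integral_integral_swap_of_hasCompactSupport
      ((hf.comp (continuous_subtype_val.comp continuous_fst)).sub
        (hf.comp ((continuous_subtype_val.comp continuous_fst).mul continuous_snd)))
      (HasCompactSupport.of_compactSpace _)]
    simp_rw [hinner]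
    rw [integral_sub _ (integrable_const _)]
    · simp
    · exact (hf.comp continuous_subtype_val).integrable_of_hasCompactSupport
        (HasCompactSupport.of_compactSpace _)
  rw [dist_eq_norm, hswap]
  calc ‖∫ x, ∫ h : K, (f h - f (h * x)) ∂ν ∂μ‖ ≤ ε * μ.real Set.univ :=
        norm_integral_le_of_norm_le_const (.of_forall fun x => by
          obtain ⟨y, hy, hε⟩ := hK x
          exact norm_integral_sub_comp_mul_le ν hf hy hε)
    _ = ε := by simp

end Averaging

/-- If closed subgroups `Hₙ` of a compact abelian group `G` (with Haar
probability measure `μ`) converge to `G` for the Hausdorff distance of a continuous length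
function `l`, and `λₙ` denotes the Haar probability measure of `Hₙ`, then for every
continuous `f : G → ℝ` the integrals `∫_{Hₙ} f dλₙ` converge to `∫_G f dμ`. -/
theorem stmt_6 {G : Type*} [CommGroup G] [TopologicalSpace G] [IsTopologicalGroup G]
    [CompactSpace G] [MeasurableSpace G] [BorelSpace G]
    (l : G → ℝ) (hcont : Continuous l)
    (hzero : ∀ g : G, l g = 0 ↔ g = 1)
    (hinv : ∀ g : G, l g⁻¹ = l g)
    (hsub : ∀ g h : G, l (g * h) ≤ l g + l h)
    (μ : Measure G) [IsProbabilityMeasure μ] [μ.IsMulLeftInvariant]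
    (H : ℕ → Subgroup G) (hHclosed : ∀ n, IsClosed ((H n : Set G)))
    (hHconv : ∀ ε > (0 : ℝ), ∃ N : ℕ, ∀ n ≥ N, ∀ g : G, ∃ x ∈ H n, l (x⁻¹ * g) < ε)
    (lam : (n : ℕ) → Measure (H n))
    (hprob : ∀ n, IsProbabilityMeasure (lam n))
    (hlaminv : ∀ n, ∀ h : H n, (lam n).map (fun x => h * x) = lam n) :
    ∀ f : G → ℝ, Continuous f →
      Filter.Tendsto (fun n => ∫ h : H n, f ↑h ∂(lam n)) Filter.atTop
        (nhds (∫ g, f g ∂μ)) := by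
  intro f hf
  rw [Metric.tendsto_atTop]
  intro ε hε
  obtain ⟨δ, hδ, hfδ⟩ := hf.exists_pos_forall_dist_lt_of_lt (d := fun u v => l (u⁻¹ * v))
    (hcont.comp (continuous_fst.inv.mul continuous_snd))
    (fun u v huv => length_pos hzero hinv hsub (mt inv_mul_eq_one.1 huv)) (half_pos hε)
  obtain ⟨N, hN⟩ := hHconv δ hδ
  refine ⟨N, fun n hn => ?_⟩
  have : CompactSpace (H n) := isCompact_iff_compactSpace.mp (hHclosed n).isCompact
  have : (lam n).IsMulLeftInvariant := ⟨hlaminv n⟩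
  have := hprob n
  refine (dist_integral_subgroup_integral_le (lam n) μ hf fun x => ?_).trans_lt (half_lt_self hε)
  obtain ⟨z, hz, hzx⟩ := hN n hn x
  exact ⟨z⁻¹, inv_mem hz, fun g => (hfδ _ _ (by rwa [inv_mul_cancel_left])).le⟩
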